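/- arXiv:0707.3888 — 5 statements merged into one kernel-verified Lean document; each statement's English description precedes it below -/
import Mathlib

section
/- For all positive integers N, M and all s,p ∈ {1,…,N}: (i) D_{s,p}(1) ≤ (M+1)²·N; (ii) for every integer k with 2 ≤ k ≤ M/2 + 1, D_{s,p}(k) ≤ (M+1)²·M²; and (iii) for every integer k with k > M/2 + 1, D_{s,p}(k) = 0. -/
/-!
If `s + i p = t + j q`, then `t` is determined by `i`, `j` and `q`, which gives (i). Two common
points `s + iₖ p = t + jₖ q` give `(i₂ - i₁) p = (j₂ - j₁) q`, so `q`, and then `t`, are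
determined by the index pairs `(i₁, i₂)` and `(j₁, j₂)`, which gives (ii). For (iii), the common
points are congruent modulo `lcm(p, q)`, which for `p ≠ q` is a proper multiple of `p` or of `q`;
on that side the indices of the common points are then congruent modulo some `m ≥ 2`, so there
are at most `M / 2 + 1` of them.
-/

open Finset

/-- The arithmetic progression `A(s,p) = {s + i·p : 0 ≤ i ≤ M}` as a set of integers. -/
def AP (M : ℕ) (s p : ℤ) : Finset ℤ :=
  (Finset.range (M + 1)).image fun i : ℕ => s + (i : ℤ) * p

/-- `D_{s,p}(k)`: the number of pairs `(t,q)`, `t,q ∈ {1,…,N}`, `q ≠ p`,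
with `|A(s,p) ∩ A(t,q)| = k`. -/
noncomputable def D (N M : ℕ) (s p : ℤ) (k : ℕ) : ℕ :=
  ((Finset.Icc (1 : ℤ) N ×ˢ Finset.Icc (1 : ℤ) N).filter
    (fun tq => tq.2 ≠ p ∧ (AP M s p ∩ AP M tq.1 tq.2).card = k)).card

lemma mem_AP {M : ℕ} {s p x : ℤ} : x ∈ AP M s p ↔ ∃ i ≤ M, x = s + (i : ℤ) * p := by
  simp [AP, eq_comm]

lemma dvd_sub_of_mem_AP {M : ℕ} {s p x y : ℤ} (hx : x ∈ AP M s p) (hy : y ∈ AP M s p) :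
    p ∣ x - y := by
  obtain ⟨i, -, rfl⟩ := mem_AP.mp hx
  obtain ⟨j, -, rfl⟩ := mem_AP.mp hy
  exact ⟨(i : ℤ) - j, by ring⟩

lemma card_le_div_add_one_of_modEq {I : Finset ℕ} {M m : ℕ} (hI : ∀ i ∈ I, i ≤ M)
    (hmod : ∀ i ∈ I, ∀ j ∈ I, i ≡ j [MOD m]) : #I ≤ M / m + 1 := by
  calc #I ≤ #(range (M / m + 1)) := by
        refine card_le_card_of_injOn (· / m) (fun i hi => ?_) fun i hi j hj hij => ?_
        · simpa [Nat.lt_succ_iff] using Nat.div_le_div_right (hI i hi)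
        · rw [← Nat.div_add_mod i m, ← Nat.div_add_mod j m, hmod i hi j hj]
          simp only at hij
          rw [hij]
    _ = M / m + 1 := card_range _

lemma card_le_div_add_one_of_subset_AP {M m : ℕ} {s p : ℤ} {K : Finset ℤ} (hp : p ≠ 0)
    (hK : K ⊆ AP M s p) (hdvd : ∀ x ∈ K, ∀ y ∈ K, (m : ℤ) * p ∣ x - y) :
    #K ≤ M / m + 1 := by
  classical
  set I : Finset ℕ := {i ∈ range (M + 1) | s + (i : ℤ) * p ∈ K}
  have hKI : K ⊆ I.image fun i : ℕ => s + (i : ℤ) * p := by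
    intro x hx
    obtain ⟨i, hi, rfl⟩ := mem_AP.mp (hK hx)
    exact mem_image.mpr ⟨i, mem_filter.mpr ⟨mem_range.mpr (by omega), hx⟩, rfl⟩
  have hI : ∀ i ∈ I, i ≤ M := fun i hi => Nat.lt_succ_iff.mp (mem_range.mp (mem_filter.mp hi).1)
  have hmod : ∀ i ∈ I, ∀ j ∈ I, i ≡ j [MOD m] := by
    intro i hi j hj
    have h := hdvd _ (mem_filter.mp hj).2 _ (mem_filter.mp hi).2
    rw [show s + (j : ℤ) * p - (s + (i : ℤ) * p) = ((j : ℤ) - i) * p by ring] at h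
    exact Nat.modEq_iff_dvd.mpr ((mul_dvd_mul_iff_right hp).mp h)
  exact (card_le_card hKI).trans (card_image_le.trans (card_le_div_add_one_of_modEq hI hmod))

lemma card_le_half_add_one_of_subset_AP {M : ℕ} {s p L : ℤ} {K : Finset ℤ} (hp : 0 < p)
    (hL : 0 < L) (hpL : p ∣ L) (hLp : L ≠ p) (hK : K ⊆ AP M s p)
    (hdvd : ∀ x ∈ K, ∀ y ∈ K, L ∣ x - y) : #K ≤ M / 2 + 1 := by
  obtain ⟨c, rfl⟩ := hpL
  have hc : 2 ≤ c := by
    have : 0 < c := pos_of_mul_pos_right hL hp.le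
    have : c ≠ 1 := by rintro rfl; simp at hLp
    omega
  lift c to ℕ using by omega
  have hK' := card_le_div_add_one_of_subset_AP (m := c) hp.ne' hK fun x hx y hy => by
    rw [mul_comm]; exact hdvd x hx y hy
  exact hK'.trans (Nat.add_le_add_right (Nat.div_le_div_left (by exact_mod_cast hc) two_pos) 1)

theorem card_AP_inter_le {M : ℕ} {s p t q : ℤ} (hp : 0 < p) (hq : 0 < q) (hpq : p ≠ q) :
    #(AP M s p ∩ AP M t q) ≤ M / 2 + 1 := by
  set K := AP M s p ∩ AP M t q
  have hL : (0 : ℤ) < Int.lcm p q := by exact_mod_cast Int.lcm_pos hp.ne' hq.ne'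
  have hdvd : ∀ x ∈ K, ∀ y ∈ K, (Int.lcm p q : ℤ) ∣ x - y := fun x hx y hy =>
    Int.coe_lcm_dvd_iff.mpr ⟨dvd_sub_of_mem_AP (mem_inter.mp hx).1 (mem_inter.mp hy).1,
      dvd_sub_of_mem_AP (mem_inter.mp hx).2 (mem_inter.mp hy).2⟩
  by_cases hLp : (Int.lcm p q : ℤ) = p
  · exact card_le_half_add_one_of_subset_AP hq hL (Int.dvd_lcm_right p q)
      (by rwa [hLp]) inter_subset_right hdvd
  · exact card_le_half_add_one_of_subset_AP hp hL (Int.dvd_lcm_left p q) hLp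
      inter_subset_left hdvd

theorem card_filter_AP_inter_nonempty_le (M : ℕ) (s p : ℤ) (T Q : Finset ℤ) :
    #{tq ∈ T ×ˢ Q | (AP M s p ∩ AP M tq.1 tq.2).Nonempty} ≤ (M + 1) ^ 2 * #Q := by
  have hsub : {tq ∈ T ×ˢ Q | (AP M s p ∩ AP M tq.1 tq.2).Nonempty} ⊆
      image₂ (fun (ij : ℕ × ℕ) (q : ℤ) => (s + ij.1 * p - ij.2 * q, q))
        (range (M + 1) ×ˢ range (M + 1)) Q := by
    rintro ⟨t, q⟩ htq
    obtain ⟨htq, x, hx⟩ := mem_filter.mp htq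
    obtain ⟨i, hi, hxi⟩ := mem_AP.mp (mem_inter.mp hx).1
    obtain ⟨j, hj, hxj⟩ := mem_AP.mp (mem_inter.mp hx).2
    refine mem_image₂.mpr ⟨(i, j), ?_, q, (mem_product.mp htq).2, ?_⟩
    · simp only [mem_product, mem_range]; omega
    · simp only [Prod.mk.injEq, and_true]; linarith
  calc _ ≤ _ := card_le_card hsub
    _ ≤ _ := card_image₂_le _ _ _
    _ = (M + 1) ^ 2 * #Q := by simp [sq]

/-- The pair `(t, q)` with `s + i₁ p = t + j₁ q` and `s + i₂ p = t + j₂ q`, for `j₁ ≠ j₂`. -/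
def apThrough (s p : ℤ) (i j : ℕ × ℕ) : ℤ × ℤ :=
  let q := ((i.2 : ℤ) - i.1) * p / ((j.2 : ℤ) - j.1)
  (s + i.1 * p - j.1 * q, q)

theorem card_filter_two_le_card_AP_inter_le (M : ℕ) (s p : ℤ) (S : Finset (ℤ × ℤ)) :
    #{tq ∈ S | 2 ≤ #(AP M s p ∩ AP M tq.1 tq.2)} ≤ (M + 1) ^ 2 * M ^ 2 := by
  have hsub : {tq ∈ S | 2 ≤ #(AP M s p ∩ AP M tq.1 tq.2)} ⊆
      image₂ (apThrough s p) (range (M + 1)).offDiag (range (M + 1)).offDiag := by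
    rintro ⟨t, q⟩ htq
    obtain ⟨x, hx, y, hy, hxy⟩ := one_lt_card.mp (mem_filter.mp htq).2
    obtain ⟨i₁, hi₁, hxi⟩ := mem_AP.mp (mem_inter.mp hx).1
    obtain ⟨j₁, hj₁, hxj⟩ := mem_AP.mp (mem_inter.mp hx).2
    obtain ⟨i₂, hi₂, hyi⟩ := mem_AP.mp (mem_inter.mp hy).1
    obtain ⟨j₂, hj₂, hyj⟩ := mem_AP.mp (mem_inter.mp hy).2
    have hj : (j₂ : ℤ) - j₁ ≠ 0 := fun h => hxy (by rw [hxj, hyj, sub_eq_zero.mp h])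
    have hpq : ((i₂ : ℤ) - i₁) * p = ((j₂ : ℤ) - j₁) * q := by
      linear_combination hxi - hyi + hyj - hxj
    have hq : ((i₂ : ℤ) - i₁) * p / ((j₂ : ℤ) - j₁) = q := by
      rw [hpq, Int.mul_ediv_cancel_left _ hj]
    refine mem_image₂.mpr ⟨(i₁, i₂), ?_, (j₁, j₂), ?_, ?_⟩
    · simp only [mem_offDiag, mem_range, ne_eq]
      exact ⟨by omega, by omega, fun h => hxy (by rw [hxi, hyi, h])⟩
    · simp only [mem_offDiag, mem_range, ne_eq]
      exact ⟨by omega, by omega, fun h => hj (by rw [h, sub_self])⟩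
    · simp only [apThrough, hq, Prod.mk.injEq, and_true]; linarith
  calc _ ≤ _ := card_le_card hsub
    _ ≤ _ := card_image₂_le _ _ _
    _ = ((M + 1) * M) ^ 2 := by simp [offDiag_card, sq, Nat.mul_succ]
    _ = (M + 1) ^ 2 * M ^ 2 := mul_pow _ _ _

theorem D_bounds_general (N M : ℕ)
    (s p : ℤ) (hp : p ∈ Finset.Icc (1 : ℤ) N) :
    D N M s p 1 ≤ (M + 1) ^ 2 * N ∧
    (∀ k : ℕ, 2 ≤ k → (k : ℝ) ≤ (M : ℝ) / 2 + 1 → D N M s p k ≤ (M + 1) ^ 2 * M ^ 2) ∧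
    (∀ k : ℕ, (M : ℝ) / 2 + 1 < (k : ℝ) → D N M s p k = 0) := by
  refine ⟨?_, fun k hk _ => ?_, fun k hk => ?_⟩
  · calc D N M s p 1 ≤ _ := card_le_card <| monotone_filter_right _ fun tq _ h =>
          card_pos.mp (h.2 ▸ one_pos)
      _ ≤ _ := card_filter_AP_inter_nonempty_le M s p _ _
      _ = (M + 1) ^ 2 * N := by simp
  · exact (card_le_card <| monotone_filter_right _ fun tq _ h => h.2 ▸ hk).trans
      (card_filter_two_le_card_AP_inter_le M s p _)
  · have hk : M / 2 + 1 < k := by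
      have : ((M / 2 : ℕ) : ℝ) ≤ (M : ℝ) / 2 := Nat.cast_div_le
      exact_mod_cast (by linarith : ((M / 2 : ℕ) : ℝ) + 1 < k)
    refine card_eq_zero.mpr <| filter_eq_empty_iff.mpr fun tq htq ⟨hqp, hcard⟩ => ?_
    have hp := (mem_Icc.mp hp).1
    have hq := (mem_Icc.mp (mem_product.mp htq).2).1
    have := card_AP_inter_le (M := M) (s := s) (t := tq.1) hp hq (Ne.symm hqp)
    omega

theorem D_bounds (N M : ℕ) (hN : 0 < N) (hM : 0 < M)
    (s p : ℤ) (hs : s ∈ Finset.Icc (1 : ℤ) N) (hp : p ∈ Finset.Icc (1 : ℤ) N) :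
    D N M s p 1 ≤ (M + 1) ^ 2 * N ∧
    (∀ k : ℕ, 2 ≤ k → (k : ℝ) ≤ (M : ℝ) / 2 + 1 → D N M s p k ≤ (M + 1) ^ 2 * M ^ 2) ∧
    (∀ k : ℕ, (M : ℝ) / 2 + 1 < (k : ℝ) → D N M s p k = 0) :=
  D_bounds_general N M s p hp
end

section
/- For all sufficiently large n the following holds: for all integers N, N' ∈ [n, 2n] and p ∈ {1,…,N}, |T(N,N',p)| ≤ n²·(log n)^5. -/
open Filter

noncomputable section

/-- The representative in `{1,…,N}` of `s + i*p` modulo `N`. -/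
def idx (N s p i : ℕ) : ℕ := (s + i * p - 1) % N + 1

/-- `M_N = ⌈(2+β) log₂ N⌉`. -/
def MN (β : ℝ) (N : ℕ) : ℕ := Nat.ceil ((2 + β) * Real.logb 2 N)

/-- The progression `{s + i·p (mod N) : 1 ≤ i ≤ M_N}`. -/
def Prog (β : ℝ) (s p N : ℕ) : Finset ℕ :=
  (Finset.Icc 1 (MN β N)).image fun i => idx N s p i

/-- `T(N,N',p)`: the set of triples `(s,s',p')`, `s ∈ [1,N]`, `s',p' ∈ [1,N']`, whose
associated progressions intersect in exactly one point. -/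
def T (β : ℝ) (N N' p : ℕ) : Finset (ℕ × ℕ × ℕ) :=
  ((Finset.Icc 1 N) ×ˢ (Finset.Icc 1 N') ×ˢ (Finset.Icc 1 N')).filter
    fun z => (Prog β z.1 p N ∩ Prog β z.2.1 z.2.2 N').card = 1

/-!
A triple of `T` comes with a common point `x = s + ip (mod N) = s' + jp' (mod N')`; `x` is
determined by `(s, i)`, and then `s'` by `(x, j, p')`. So `(s, s', p') ↦ (s, i, j, p')` is
injective, and `|T| ≤ N · M_N · M_{N'} · N' ≤ 4n² (C log n)²` with `C` depending only on `β`,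
which is at most `n² (log n)⁵` once `log n ≥ 4C²`.
-/

open Finset Real

lemma idx_injOn_start (N p i : ℕ) : Set.InjOn (fun s => idx N s p i) (Set.Icc 1 N) := by
  intro s₁ hs₁ s₂ hs₂ h
  simp only [Set.mem_Icc] at hs₁ hs₂
  have hmod : (s₁ - 1 + i * p) % N = (s₂ - 1 + i * p) % N := by
    simp only [idx] at h
    rw [show s₁ - 1 + i * p = s₁ + i * p - 1 by omega,
      show s₂ - 1 + i * p = s₂ + i * p - 1 by omega]
    omega
  have := (Nat.ModEq.add_right_cancel' (i * p) hmod).eq_of_lt_of_lt (by omega) (by omega)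
  omega

lemma exists_idx_eq_of_mem_T {β : ℝ} {N N' p : ℕ} {z : ℕ × ℕ × ℕ} (hz : z ∈ T β N N' p) :
    ∃ i ∈ Icc 1 (MN β N), ∃ j ∈ Icc 1 (MN β N'), idx N z.1 p i = idx N' z.2.1 z.2.2 j := by
  obtain ⟨x, hx⟩ := card_pos.mp (by rw [(mem_filter.mp hz).2]; exact one_pos)
  obtain ⟨i, hi, rfl⟩ := mem_image.mp (mem_inter.mp hx).1
  obtain ⟨j, hj, hij⟩ := mem_image.mp (mem_inter.mp hx).2
  exact ⟨i, hi, j, hj, hij.symm⟩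

lemma card_T_le (β : ℝ) (N N' p : ℕ) : #(T β N N' p) ≤ N * MN β N * MN β N' * N' := by
  choose! i hi j hj hij using fun z (hz : z ∈ T β N N' p) => exists_idx_eq_of_mem_T hz
  have hbox := card_le_card_of_injOn (fun z => (z.1, i z, j z, z.2.2)) (s := T β N N' p)
    (t := Icc 1 N ×ˢ Icc 1 (MN β N) ×ˢ Icc 1 (MN β N') ×ˢ Icc 1 N') ?_ ?_
  · simpa only [card_product, Nat.card_Icc, add_tsub_cancel_right, mul_assoc] using hbox
  · intro z hz
    have hzT := mem_filter.mp hz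
    simp only [mem_coe, mem_product] at hzT ⊢
    exact ⟨hzT.1.1, hi z hz, hj z hz, hzT.1.2.2⟩
  · rintro ⟨s, s'₁, p'⟩ hz₁ ⟨_, s'₂, _⟩ hz₂ h
    simp only [Prod.mk.injEq] at h
    obtain ⟨rfl, hi_eq, hj_eq, rfl⟩ := h
    have hcommon := (hij _ hz₁).symm.trans (hi_eq ▸ hj_eq ▸ hij _ hz₂)
    have hs'₁ : s'₁ ∈ Set.Icc 1 N' := by simp_all [T]
    have hs'₂ : s'₂ ∈ Set.Icc 1 N' := by simp_all [T]
    rw [idx_injOn_start N' p' _ hs'₁ hs'₂ hcommon]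

lemma natCast_MN_le (β : ℝ) (N : ℕ) : (MN β N : ℝ) ≤ (2 + |β|) * logb 2 N + 1 := by
  have hlogb : 0 ≤ logb 2 N := div_nonneg (log_natCast_nonneg N) (log_nonneg one_le_two)
  calc (MN β N : ℝ) ≤ ⌈(2 + |β|) * logb 2 N⌉₊ := by
        unfold MN
        gcongr
        exact le_abs_self β
    _ ≤ (2 + |β|) * logb 2 N + 1 := (Nat.ceil_lt_add_one (by positivity)).le

lemma logb_two_le_three_mul_log {n N : ℕ} (hN : N ≤ 2 * n) (hL : 1 ≤ log n) :
    logb 2 N ≤ 3 * log n := by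
  have hn : (0 : ℝ) < n := Nat.cast_pos.mpr (Nat.pos_of_ne_zero (by rintro rfl; norm_num at hL))
  have hlogN : log N ≤ log 2 + log n := by
    rcases Nat.eq_zero_or_pos N with rfl | hN0
    · simp only [Nat.cast_zero, log_zero]
      linarith [log_pos one_lt_two]
    rw [← log_mul two_ne_zero hn.ne']
    exact log_le_log (by exact_mod_cast hN0) (by exact_mod_cast hN)
  have hlog2 : 2 / 3 < log 2 := by linarith [log_two_gt_d9]
  rw [logb, div_le_iff₀ (by linarith)]
  nlinarith [log_two_lt_d9]

lemma natCast_MN_le_mul_log (β : ℝ) {n N : ℕ} (hN : N ≤ 2 * n) (hL : 1 ≤ log n) :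
    (MN β N : ℝ) ≤ (3 * (2 + |β|) + 1) * log n := by
  have := logb_two_le_three_mul_log hN hL
  nlinarith [natCast_MN_le β N, abs_nonneg β]

theorem T_card_bound_general (β : ℝ) :
    ∀ᶠ n : ℕ in atTop, ∀ N N' : ℕ, N ∈ Finset.Icc n (2 * n) → N' ∈ Finset.Icc n (2 * n) →
      ∀ p ∈ Finset.Icc 1 N,
        ((T β N N' p).card : ℝ) ≤ (n : ℝ) ^ 2 * (Real.log n) ^ 5 := by
  set C := 3 * (2 + |β|) + 1
  have hlog : Tendsto (fun n : ℕ => log n) atTop atTop :=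
    tendsto_log_atTop.comp tendsto_natCast_atTop_atTop
  filter_upwards [hlog.eventually_ge_atTop (max 1 (4 * C ^ 2))] with n hL N N' hN hN' p _
  rw [mem_Icc] at hN hN'
  have hL1 : 1 ≤ log n := le_of_max_le_left hL
  have hL3 : 4 * C ^ 2 ≤ log n ^ 3 := by
    nlinarith [le_of_max_le_right hL, pow_le_pow_right₀ hL1 (by norm_num : 1 ≤ 3)]
  have hNle : (N : ℝ) ≤ 2 * n := by exact_mod_cast hN.2
  have hN'le : (N' : ℝ) ≤ 2 * n := by exact_mod_cast hN'.2
  calc ((T β N N' p).card : ℝ) ≤ N * MN β N * MN β N' * N' := by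
        exact_mod_cast card_T_le β N N' p
    _ ≤ (2 * n) * (C * log n) * (C * log n) * (2 * n) := by
        gcongr
        exacts [natCast_MN_le_mul_log β hN.2 hL1, natCast_MN_le_mul_log β hN'.2 hL1]
    _ = 4 * C ^ 2 * (n ^ 2 * log n ^ 2) := by ring
    _ ≤ log n ^ 3 * (n ^ 2 * log n ^ 2) := by gcongr
    _ = n ^ 2 * log n ^ 5 := by ring

theorem T_card_bound (β : ℝ) (hβ : 0 < β) (hβ1 : β < 1) :
    ∀ᶠ n : ℕ in atTop, ∀ N N' : ℕ, N ∈ Finset.Icc n (2 * n) → N' ∈ Finset.Icc n (2 * n) →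
      ∀ p ∈ Finset.Icc 1 N,
        ((T β N N' p).card : ℝ) ≤ (n : ℝ) ^ 2 * (Real.log n) ^ 5 :=
  T_card_bound_general β
end
end

section
/- For all sufficiently large n the following holds: for all integers N, N' ∈ [n, 2n] and p ∈ {1,…,N}, |S(N,N',p)| ≤ n·(log n)^9. -/
open Filter

noncomputable section

/-- `S(N,N',p)`: the set of triples `(s,s',p')`, `s ∈ [1,N]`, `s',p' ∈ [1,N']`, whose
associated progressions intersect in at least two points. -/
def S (β : ℝ) (N N' p : ℕ) : Finset (ℕ × ℕ × ℕ) :=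
  ((Finset.Icc 1 N) ×ˢ (Finset.Icc 1 N') ×ˢ (Finset.Icc 1 N')).filter
    fun z => 2 ≤ (Prog β z.1 p N ∩ Prog β z.2.1 z.2.2 N').card


/-!
A triple `(s, s', p') ∈ S(N, N', p)` is pinned down by `s` together with the positions
`i₁, i₂ ≤ M_N`, `j₁ ≠ j₂ ≤ M_{N'}` of two common points and the numbers of wrap-arounds
`q₁, q₂ ≤ M_{N'}` modulo `N'`: given these, `s' + j_k p' = q_k N' + (s + i_k p mod N)` for
`k = 1, 2` is a nondegenerate linear system in `(s', p')`. Hence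
`|S| ≤ N · M_N² · M_{N'}² · (M_{N'} + 1)² = O(n log⁶ n)`.
-/

open Finset

theorem exists_add_mul_eq_mul_add_idx {N s p : ℕ} (hs : 1 ≤ s) (hsN : s ≤ N) (hp : p ≤ N)
    (i : ℕ) : ∃ q ≤ i, s + i * p = q * N + idx N s p i := by
  refine ⟨(s + i * p - 1) / N, ?_, ?_⟩
  · have hip : i * p ≤ i * N := Nat.mul_le_mul_left i hp
    rw [Nat.le_iff_lt_add_one, Nat.div_lt_iff_lt_mul (by omega), add_mul, one_mul]
    omega
  · have := Nat.div_add_mod' (s + i * p - 1) N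
    rw [idx]
    omega

theorem eq_and_eq_of_add_mul_eq_add_mul {a b c d j k : ℕ} (hjk : j ≠ k)
    (hj : a + j * b = c + j * d) (hk : a + k * b = c + k * d) : a = c ∧ b = d := by
  have hbd : b = d := by
    have hj' : (a + j * b : ℤ) = c + j * d := by exact_mod_cast hj
    have hk' : (a + k * b : ℤ) = c + k * d := by exact_mod_cast hk
    have hprod : ((j : ℤ) - k) * ((b : ℤ) - d) = 0 := by linear_combination hj' - hk'
    have hjk' : (j : ℤ) - k ≠ 0 := sub_ne_zero.mpr (by exact_mod_cast hjk)
    exact_mod_cast sub_eq_zero.mp ((mul_eq_zero.mp hprod).resolve_left hjk')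
  subst hbd
  exact ⟨by omega, rfl⟩

/-- `(s, s', p')` has the two common points `idx N s p i_k = idx N' s' p' j_k`, the second one
reached after `q_k` wrap-arounds modulo `N'`. -/
def IsWitness (N N' p : ℕ) : ℕ × ℕ × ℕ → ℕ × (ℕ × ℕ) × (ℕ × ℕ) × (ℕ × ℕ) → Prop
  | (s, s', p'), (t, (i₁, i₂), (j₁, j₂), (q₁, q₂)) =>
    s = t ∧ j₁ ≠ j₂ ∧ s' + j₁ * p' = q₁ * N' + idx N s p i₁ ∧
      s' + j₂ * p' = q₂ * N' + idx N s p i₂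

def witnesses (β : ℝ) (N N' : ℕ) : Finset (ℕ × (ℕ × ℕ) × (ℕ × ℕ) × (ℕ × ℕ)) :=
  Icc 1 N ×ˢ (Icc 1 (MN β N) ×ˢ Icc 1 (MN β N)) ×ˢ (Icc 1 (MN β N') ×ˢ Icc 1 (MN β N')) ×ˢ
    (range (MN β N' + 1) ×ˢ range (MN β N' + 1))

theorem card_witnesses (β : ℝ) (N N' : ℕ) :
    #(witnesses β N N') = N * MN β N ^ 2 * MN β N' ^ 2 * (MN β N' + 1) ^ 2 := by
  simp only [witnesses, card_product, Nat.card_Icc, card_range, Nat.add_sub_cancel]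
  ring

theorem exists_isWitness {β : ℝ} {N N' p : ℕ} {z : ℕ × ℕ × ℕ} (hz : z ∈ S β N N' p) :
    ∃ w ∈ witnesses β N N', IsWitness N N' p z w := by
  obtain ⟨s, s', p'⟩ := z
  simp only [S, mem_filter, mem_product, mem_Icc] at hz
  obtain ⟨⟨hs, hs', hp'⟩, hcard⟩ := hz
  obtain ⟨x, hx, y, hy, hxy⟩ := one_lt_card.mp hcard
  simp only [mem_inter, Prog, mem_image, mem_Icc] at hx hy
  obtain ⟨⟨i₁, hi₁, rfl⟩, j₁, hj₁, hx⟩ := hx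
  obtain ⟨⟨i₂, hi₂, rfl⟩, j₂, hj₂, hy⟩ := hy
  obtain ⟨q₁, hq₁, hwrap₁⟩ := exists_add_mul_eq_mul_add_idx hs'.1 hs'.2 hp'.2 j₁
  obtain ⟨q₂, hq₂, hwrap₂⟩ := exists_add_mul_eq_mul_add_idx hs'.1 hs'.2 hp'.2 j₂
  refine ⟨(s, (i₁, i₂), (j₁, j₂), (q₁, q₂)), ?_, rfl, ?_, hx ▸ hwrap₁, hy ▸ hwrap₂⟩
  · simp only [witnesses, mem_product, mem_Icc, mem_range]
    omega
  · rintro rfl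
    exact hxy (hx.symm.trans hy)

theorem subsingleton_isWitness (N N' p : ℕ) (w : ℕ × (ℕ × ℕ) × (ℕ × ℕ) × (ℕ × ℕ)) :
    {z | IsWitness N N' p z w}.Subsingleton := by
  obtain ⟨t, -, ⟨j₁, j₂⟩, -⟩ := w
  rintro ⟨s, a, b⟩ ⟨rfl, hj, h₁, h₂⟩ ⟨u, c, d⟩ ⟨rfl, -, h₁', h₂'⟩
  obtain ⟨rfl, rfl⟩ := eq_and_eq_of_add_mul_eq_add_mul hj (h₁.trans h₁'.symm) (h₂.trans h₂'.symm)
  rfl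

theorem card_S_le (β : ℝ) (N N' p : ℕ) :
    #(S β N N' p) ≤ N * MN β N ^ 2 * MN β N' ^ 2 * (MN β N' + 1) ^ 2 := by
  rw [← card_witnesses]
  exact card_le_card_of_forall_subsingleton (IsWitness N N' p) (fun _ ↦ exists_isWitness)
    fun w _ ↦ (subsingleton_isWitness N N' p w).anti fun _ hz ↦ hz.2

theorem MN_le {β : ℝ} (hβ : β ≤ 1) (N : ℕ) : (MN β N : ℝ) ≤ 3 * Real.logb 2 N + 1 := by
  have hlog : 0 ≤ Real.logb 2 N :=
    div_nonneg (Real.log_natCast_nonneg N) (Real.log_nonneg one_le_two)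
  calc (MN β N : ℝ) ≤ ⌈3 * Real.logb 2 N⌉₊ := by
        unfold MN
        gcongr
        linarith
    _ ≤ 3 * Real.logb 2 N + 1 := (Nat.ceil_lt_add_one (by positivity)).le

theorem MN_add_one_le {β : ℝ} (hβ : β ≤ 1) {n N : ℕ} (hN : 0 < N) (hNn : N ≤ 2 * n) :
    (MN β N : ℝ) + 1 ≤ 6 * Real.log n + 5 := by
  have hn : (0 : ℝ) < n := by norm_cast; omega
  have hlog2 : 1 / 2 < Real.log 2 := by linarith [Real.log_two_gt_d9]
  have hlogb : Real.logb 2 N ≤ 1 + 2 * Real.log n := by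
    calc Real.logb 2 N ≤ Real.logb 2 (2 * n) :=
          Real.logb_le_logb_of_le one_lt_two (by exact_mod_cast hN) (by exact_mod_cast hNn)
      _ = 1 + Real.log n / Real.log 2 := by
          rw [Real.logb, Real.log_mul two_ne_zero hn.ne', add_div,
            div_self (Real.log_pos one_lt_two).ne']
      _ ≤ 1 + 2 * Real.log n := by
          gcongr
          rw [div_le_iff₀ (by linarith)]
          nlinarith [Real.log_nonneg (by exact_mod_cast hn : (1 : ℝ) ≤ n)]
  linarith [MN_le hβ N]

theorem S_card_bound_general (β : ℝ) (hβ1 : β < 1) :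
    ∀ᶠ n : ℕ in atTop, ∀ N N' : ℕ, N ∈ Finset.Icc n (2 * n) → N' ∈ Finset.Icc n (2 * n) →
      ∀ p ∈ Finset.Icc 1 N,
        ((S β N N' p).card : ℝ) ≤ (n : ℝ) * (Real.log n) ^ 9 := by
  filter_upwards [(Real.tendsto_log_atTop.comp tendsto_natCast_atTop_atTop).eventually_ge_atTop 62,
    eventually_ge_atTop 1] with n hlog hn
  intro N N' hN hN' p _
  rw [mem_Icc] at hN hN'
  set L := Real.log n
  replace hlog : 62 ≤ L := hlog
  have hM : (MN β N : ℝ) ≤ 7 * L := by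
    linarith [MN_add_one_le hβ1.le (by omega : 0 < N) hN.2]
  have hM' : (MN β N' : ℝ) + 1 ≤ 7 * L := by
    linarith [MN_add_one_le hβ1.le (by omega : 0 < N') hN'.2]
  have hL3 : 2 * 7 ^ 6 ≤ L ^ 3 := by nlinarith [pow_le_pow_left₀ (by norm_num) hlog 3]
  calc ((S β N N' p).card : ℝ)
      ≤ N * MN β N ^ 2 * MN β N' ^ 2 * (MN β N' + 1) ^ 2 := by exact_mod_cast card_S_le β N N' p
    _ ≤ (2 * n) * (7 * L) ^ 2 * (7 * L) ^ 2 * (7 * L) ^ 2 := by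
        gcongr
        · exact_mod_cast hN.2
        · linarith
    _ = n * (2 * 7 ^ 6 * L ^ 6) := by ring
    _ ≤ n * L ^ 9 := by gcongr; nlinarith [pow_nonneg (by linarith : (0 : ℝ) ≤ L) 6]

theorem S_card_bound (β : ℝ) (hβ : 0 < β) (hβ1 : β < 1) :
    ∀ᶠ n : ℕ in atTop, ∀ N N' : ℕ, N ∈ Finset.Icc n (2 * n) → N' ∈ Finset.Icc n (2 * n) →
      ∀ p ∈ Finset.Icc 1 N,
        ((S β N N' p).card : ℝ) ≤ (n : ℝ) * (Real.log n) ^ 9 :=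
  S_card_bound_general β hβ1
end
end

section
/- For all sufficiently large n the following holds: for every (s,p,N) ∈ L_n, |U(s,p,N)| ≤ (log n)^7. -/
open Filter

noncomputable section

open scoped Classical in
/-- `L_n = {(s,p,N) : n ≤ N ≤ 2n, 1 ≤ s ≤ N, N/6 ≤ p ≤ N/5}`. -/
def L (n : ℕ) : Finset (ℕ × ℕ × ℕ) :=
  ((Finset.Icc 1 (2 * n)) ×ˢ (Finset.Icc 1 (2 * n)) ×ˢ (Finset.Icc n (2 * n))).filter
    fun spN => spN.1 ≤ spN.2.2 ∧
      (spN.2.2 : ℝ) / 6 ≤ (spN.2.1 : ℝ) ∧ (spN.2.1 : ℝ) ≤ (spN.2.2 : ℝ) / 5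

open scoped Classical in
/-- `U(s,p,N)`: the set of triples `(s',p',N') ∈ L_n` whose associated progression meets
the progression of `(s,p,N)` in at least `2·M_{N'}/5` points. -/
def UU (β : ℝ) (n s p N : ℕ) : Finset (ℕ × ℕ × ℕ) :=
  (L n).filter fun b =>
    2 * (MN β b.2.2 : ℝ) / 5 ≤ ((Prog β s p N ∩ Prog β b.1 b.2.1 b.2.2).card : ℝ)

namespace UCB

def Tf (N s p i : ℕ) : ℕ := (s + i * p - 1) / N

lemma idx_pos (N s p i : ℕ) : 1 ≤ idx N s p i := Nat.le_add_left 1 _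

lemma idx_le (N s p i : ℕ) (hN : 0 < N) : idx N s p i ≤ N :=
  Nat.mod_lt _ hN

lemma idx_eq (N s p i : ℕ) (hs : 1 ≤ s) :
    (idx N s p i : ℤ) = (s : ℤ) + i * p - N * Tf N s p i := by
  have h1 : 1 ≤ s + i * p := le_trans hs (Nat.le_add_right _ _)
  have h := Nat.mod_add_div (s + i * p - 1) N
  unfold idx Tf
  have hc : ((s + i * p - 1 : ℕ) : ℤ) = (s : ℤ) + i * p - 1 := by
    push_cast [h1]; ring
  zify at h
  push_cast
  linarith [h, hc]

lemma Tf_mono (N s p : ℕ) {i j : ℕ} (hij : i ≤ j) : Tf N s p i ≤ Tf N s p j := by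
  apply Nat.div_le_div_right
  have : i * p ≤ j * p := Nat.mul_le_mul_right _ hij
  omega

lemma Tf_diff_lt (N s p : ℕ) {i j : ℕ} (hN : 0 < N) (hs : 1 ≤ s) :
    ((j : ℤ) * p - i * p) - N < N * ((Tf N s p j : ℤ) - Tf N s p i) ∧
    (N : ℤ) * ((Tf N s p j : ℤ) - Tf N s p i) < ((j : ℤ) * p - i * p) + N := by
  have h1 : 1 ≤ s + i * p := le_trans hs (Nat.le_add_right _ _)
  have h2 : 1 ≤ s + j * p := le_trans hs (Nat.le_add_right _ _)
  have hA := Nat.mod_add_div (s + i * p - 1) N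
  have hB := Nat.mod_add_div (s + j * p - 1) N
  have hAm : (s + i * p - 1) % N < N := Nat.mod_lt _ hN
  have hBm : (s + j * p - 1) % N < N := Nat.mod_lt _ hN
  unfold Tf
  have hcA : ((s + i * p - 1 : ℕ) : ℤ) = (s : ℤ) + i * p - 1 := by push_cast [h1]; ring
  have hcB : ((s + j * p - 1 : ℕ) : ℤ) = (s : ℤ) + j * p - 1 := by push_cast [h2]; ring
  set q1 := (s + i * p - 1) / N with hq1
  set q2 := (s + j * p - 1) / N with hq2
  set r1 := (s + i * p - 1) % N with hr1
  set r2 := (s + j * p - 1) % N with hr2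
  have hA' : (r1 : ℤ) + N * q1 = (s : ℤ) + i * p - 1 := by rw [← hcA]; exact_mod_cast hA
  have hB' : (r2 : ℤ) + N * q2 = (s : ℤ) + j * p - 1 := by rw [← hcB]; exact_mod_cast hB
  have h01 : (0 : ℤ) ≤ r1 := Int.natCast_nonneg _
  have h02 : (0 : ℤ) ≤ r2 := Int.natCast_nonneg _
  have hAm' : (r1 : ℤ) < N := by exact_mod_cast hAm
  have hBm' : (r2 : ℤ) < N := by exact_mod_cast hBm
  constructor <;> rw [mul_sub] <;> linarith

lemma idx_diff (N s p : ℕ) (i j : ℕ) (hs : 1 ≤ s) :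
    (idx N s p j : ℤ) - idx N s p i
      = ((j : ℤ) * p - i * p) - N * ((Tf N s p j : ℤ) - Tf N s p i) := by
  rw [idx_eq N s p i hs, idx_eq N s p j hs]; ring

/-- Decoding function: from the 8-tuple of data recover `(s',p',N')`. -/
def recover (K s p N : ℕ) (d : ℕ × ℕ × ℕ × ℕ × ℕ × ℕ × ℕ × ℕ) : ℕ × ℕ × ℕ :=
  let x1 : ℤ := idx N s p d.1
  let x2 : ℤ := idx N s p d.2.1
  let i1 : ℤ := d.2.2.1
  let a1 : ℤ := d.2.2.2.1
  let e2 : ℤ := (d.2.2.2.2.1 : ℤ) - K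
  let ε2 : ℤ := d.2.2.2.2.2.1
  let a2 : ℤ := d.2.2.2.2.2.2.1
  let w : ℤ := d.2.2.2.2.2.2.2
  let p' : ℤ := (x2 - x1) / a1
  let d2 : ℤ := e2 * p - ((e2 * p + N - 1) / N - ε2) * N
  let N' : ℤ := (a2 * p' - d2) / w
  let s' : ℤ := (x1 - 1 - i1 * p') % N' + 1
  (s'.toNat, p'.toNat, N'.toNat)

lemma recover_spec (K s p N : ℕ) (u3 u4 i1 a1 e2' ε2 a2 w : ℕ) (s' p' N' : ℕ)
    (hs'1 : 1 ≤ s') (hs'N : s' ≤ N')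
    (ha1 : 0 < a1) (hw : 0 < w)
    (hp : (idx N s p u4 : ℤ) - idx N s p u3 = (a1 : ℤ) * p')
    (hd : ((e2' : ℤ) - K) * p - ((((e2' : ℤ) - K) * p + N - 1) / N - (ε2 : ℤ)) * N
        = (a2 : ℤ) * p' - (w : ℤ) * N')
    (hx : (idx N s p u3 : ℤ) = (s' : ℤ) + i1 * p' - N' * Tf N' s' p' i1) :
    recover K s p N (u3, u4, i1, a1, e2', ε2, a2, w) = (s', p', N') := by
  have ha1' : (a1 : ℤ) ≠ 0 := by exact_mod_cast ha1.ne'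
  have hw' : (w : ℤ) ≠ 0 := by exact_mod_cast hw.ne'
  have hprec : ((idx N s p u4 : ℤ) - idx N s p u3) / a1 = (p' : ℤ) := by
    rw [hp, Int.mul_ediv_cancel_left _ ha1']
  have hNrec : ((a2 : ℤ) * p' -
      (((e2' : ℤ) - K) * p - ((((e2' : ℤ) - K) * p + N - 1) / N - (ε2 : ℤ)) * N)) / w
      = (N' : ℤ) := by
    rw [hd]
    have : (a2 : ℤ) * p' - ((a2 : ℤ) * p' - (w : ℤ) * N') = (w : ℤ) * N' := by ring
    rw [this, Int.mul_ediv_cancel_left _ hw']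
  have hsrec : ((idx N s p u3 : ℤ) - 1 - (i1 : ℤ) * p') % N' + 1 = (s' : ℤ) := by
    have h1 : (idx N s p u3 : ℤ) - 1 - (i1 : ℤ) * p'
        = ((s' : ℤ) - 1) - (N' : ℤ) * Tf N' s' p' i1 := by rw [hx]; ring
    have h2 : (s' : ℤ) - 1 - (N' : ℤ) * Tf N' s' p' i1
        = (s' : ℤ) - 1 + (N' : ℤ) * (-(Tf N' s' p' i1 : ℤ)) := by ring
    have hlb : (0:ℤ) ≤ (s':ℤ) - 1 := by
      have : (1:ℤ) ≤ (s':ℤ) := by exact_mod_cast hs'1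
      linarith
    have hub : (s':ℤ) - 1 < (N':ℤ) := by
      have : (s':ℤ) ≤ (N':ℤ) := by exact_mod_cast hs'N
      linarith
    rw [h1, h2, Int.add_mul_emod_self_left, Int.emod_eq_of_lt hlb hub]
    ring
  simp only [recover]
  rw [hprec, hNrec, hsrec]
  simp

lemma encode_diff (K s p N b1 b2 : ℕ) (hs : 1 ≤ s) (hN : 0 < N)
    (hb1K : b1 ≤ K) :
    ∃ ε2 : ℕ, ε2 ≤ 1 ∧
      (((b2 + K - b1 : ℕ) : ℤ) - K) * p
        - ((((((b2 + K - b1 : ℕ) : ℤ) - K) * p + N - 1) / N) - (ε2 : ℤ)) * N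
      = (idx N s p b2 : ℤ) - idx N s p b1 := by
  have hcb : ((b2 + K - b1 : ℕ) : ℤ) - K = (b2 : ℤ) - b1 := by
    have : b1 ≤ b2 + K := le_trans hb1K (Nat.le_add_left _ _)
    push_cast [this]; ring
  set e2 : ℤ := (b2 : ℤ) - b1 with he2
  set f : ℤ := (Tf N s p b2 : ℤ) - Tf N s p b1 with hf
  have hdiff : (idx N s p b2 : ℤ) - idx N s p b1 = e2 * p - N * f := by
    rw [idx_diff N s p b1 b2 hs, he2, hf]; ring
  have hub : (idx N s p b2 : ℤ) - idx N s p b1 ≤ N - 1 := by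
    have h1' : (1:ℤ) ≤ idx N s p b1 := by exact_mod_cast idx_pos N s p b1
    have h2' : (idx N s p b2 : ℤ) ≤ N := by exact_mod_cast idx_le N s p b2 hN
    linarith
  have hlb : (1:ℤ) - N ≤ (idx N s p b2 : ℤ) - idx N s p b1 := by
    have h1' : (idx N s p b1 : ℤ) ≤ N := by exact_mod_cast idx_le N s p b1 hN
    have h2' : (1:ℤ) ≤ idx N s p b2 := by exact_mod_cast idx_pos N s p b2
    linarith
  have hNz : (0:ℤ) < N := by exact_mod_cast hN
  set C : ℤ := (e2 * p + N - 1) / N with hC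
  have hfC : f ≤ C := by
    rw [hC, Int.le_ediv_iff_mul_le hNz]
    have := hdiff ▸ hlb
    linarith
  have hCf : C ≤ f + 1 := by
    by_contra hcon
    push_neg at hcon
    have h2 : f + 2 ≤ C := by linarith
    rw [hC, Int.le_ediv_iff_mul_le hNz] at h2
    have := hdiff ▸ hub
    linarith
  refine ⟨(C - f).toNat, ?_, ?_⟩
  · omega
  · have htn : (((C - f).toNat : ℤ)) = C - f := Int.toNat_of_nonneg (by linarith)
    rw [hcb, htn, ← hC, hdiff]; ring


def box (K a1max a2max wmax : ℕ) : Finset (ℕ × ℕ × ℕ × ℕ × ℕ × ℕ × ℕ × ℕ) :=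
  Finset.Icc 1 K ×ˢ Finset.Icc 1 K ×ˢ Finset.Icc 1 K ×ˢ Finset.Icc 1 a1max ×ˢ
    Finset.Icc 0 (2 * K) ×ˢ Finset.Icc 0 1 ×ˢ Finset.Icc 1 a2max ×ˢ Finset.Icc 1 wmax

lemma box_card (K a1max a2max wmax : ℕ) :
    (box K a1max a2max wmax).card = K * (K * (K * (a1max * ((2 * K + 1) * (2 * (a2max * wmax)))))) := by
  simp [box, Nat.card_Icc]

lemma build (β : ℝ) (K s p N s' p' N' M' a1max a2max wmax : ℕ)
    (hs1 : 1 ≤ s) (hN0 : 0 < N) (hs'1 : 1 ≤ s') (hs'N' : s' ≤ N')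
    (hMNK : MN β N ≤ K) (hM'K : M' ≤ K)
    (i1 j1 i2 j2 : ℕ)
    (h1i : 1 ≤ i1) (hi1M : i1 ≤ M')
    (hij1 : i1 < j1) (hT1 : Tf N' s' p' i1 = Tf N' s' p' j1)
    (ha1 : j1 - i1 ≤ a1max)
    (hx1 : idx N' s' p' i1 ∈ Prog β s p N) (hx2 : idx N' s' p' j1 ∈ Prog β s p N)
    (hij2 : i2 < j2) (hT2 : Tf N' s' p' i2 < Tf N' s' p' j2)
    (ha2 : j2 - i2 ≤ a2max) (hwmax : Tf N' s' p' j2 - Tf N' s' p' i2 ≤ wmax)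
    (hy1 : idx N' s' p' i2 ∈ Prog β s p N) (hy2 : idx N' s' p' j2 ∈ Prog β s p N) :
    (s', p', N') ∈ (box K a1max a2max wmax).image (recover K s p N) := by
  rw [Prog, Finset.mem_image] at hx1 hx2 hy1 hy2
  obtain ⟨u3, hu3m, hu3⟩ := hx1
  obtain ⟨u4, hu4m, hu4⟩ := hx2
  obtain ⟨b1, hb1m, hb1⟩ := hy1
  obtain ⟨b2, hb2m, hb2⟩ := hy2
  rw [Finset.mem_Icc] at hu3m hu4m hb1m hb2m
  -- the ℤ-relation for the first pair
  have hp : (idx N s p u4 : ℤ) - idx N s p u3 = ((j1 - i1 : ℕ) : ℤ) * p' := by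
    rw [hu3, hu4, idx_diff N' s' p' i1 j1 hs'1, hT1]
    have hc : ((j1 - i1 : ℕ) : ℤ) = (j1 : ℤ) - i1 := by
      push_cast [le_of_lt hij1]; ring
    rw [hc]; ring
  -- the ℤ-relation for the second pair
  obtain ⟨ε2, hε2le, hε2⟩ := encode_diff K s p N b1 b2 hs1 hN0 (le_trans hb1m.2 hMNK)
  have hd : (((b2 + K - b1 : ℕ) : ℤ) - K) * p
      - ((((((b2 + K - b1 : ℕ) : ℤ) - K) * p + N - 1) / N) - (ε2 : ℤ)) * N
      = ((j2 - i2 : ℕ) : ℤ) * p' - ((Tf N' s' p' j2 - Tf N' s' p' i2 : ℕ) : ℤ) * N' := by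
    rw [hε2, hb1, hb2, idx_diff N' s' p' i2 j2 hs'1]
    have hc1 : ((j2 - i2 : ℕ) : ℤ) = (j2 : ℤ) - i2 := by push_cast [le_of_lt hij2]; ring
    have hc2 : ((Tf N' s' p' j2 - Tf N' s' p' i2 : ℕ) : ℤ)
        = (Tf N' s' p' j2 : ℤ) - Tf N' s' p' i2 := by push_cast [le_of_lt hT2]; ring
    rw [hc1, hc2]; ring
  have hxr : (idx N s p u3 : ℤ) = (s' : ℤ) + i1 * p' - N' * Tf N' s' p' i1 := by
    rw [hu3, idx_eq N' s' p' i1 hs'1]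
  refine Finset.mem_image.mpr ⟨(u3, u4, i1, j1 - i1, b2 + K - b1, ε2,
      j2 - i2, Tf N' s' p' j2 - Tf N' s' p' i2), ?_, ?_⟩
  · simp only [box, Finset.mem_product, Finset.mem_Icc]
    refine ⟨⟨hu3m.1, le_trans hu3m.2 hMNK⟩, ⟨hu4m.1, le_trans hu4m.2 hMNK⟩,
      ⟨h1i, le_trans hi1M hM'K⟩, ⟨by omega, ha1⟩, ⟨Nat.zero_le _, ?_⟩,
      ⟨Nat.zero_le _, hε2le⟩, ⟨by omega, ha2⟩, ⟨by omega, hwmax⟩⟩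
    have := le_trans hb2m.2 hMNK
    omega
  · exact recover_spec K s p N u3 u4 i1 (j1 - i1) (b2 + K - b1) ε2 (j2 - i2)
      (Tf N' s' p' j2 - Tf N' s' p' i2) s' p' N' hs'1 hs'N' (by omega) (by omega) hp hd hxr


lemma MN_mono (β : ℝ) (hβ : 0 < β) {a b : ℕ} (ha : 1 ≤ a) (hab : a ≤ b) :
    MN β a ≤ MN β b := by
  apply Nat.ceil_le_ceil
  apply mul_le_mul_of_nonneg_left _ (by linarith)
  apply Real.logb_le_logb_of_le (by norm_num : (1:ℝ) < 2)
  · exact_mod_cast ha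
  · exact_mod_cast hab

set_option maxHeartbeats 1000000 in
lemma UU_subset (β : ℝ) (hβ : 0 < β) (n s p N : ℕ) (hn : 1 ≤ n) (hM18 : 18 ≤ MN β n)
    (ha : (s, p, N) ∈ L n) :
    UU β n s p N ⊆
      (box (MN β (2*n)) 2 (MN β (2*n)) (MN β (2*n))).image (recover (MN β (2*n)) s p N)
      ∪ (box (MN β (2*n)) (MN β (2*n)) 2 1).image (recover (MN β (2*n)) s p N) := by
  simp only [L, Finset.mem_filter, Finset.mem_product, Finset.mem_Icc] at ha
  obtain ⟨⟨⟨hs1, _⟩, _, hNn, hN2n⟩, hsN, _, _⟩ := ha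
  have hN0 : 0 < N := le_trans hn hNn
  rintro ⟨s', p', N'⟩ hb
  simp only [UU, Finset.mem_filter] at hb
  obtain ⟨hbL, hcard⟩ := hb
  simp only [L, Finset.mem_filter, Finset.mem_product, Finset.mem_Icc] at hbL
  obtain ⟨⟨⟨hs'1, _⟩, ⟨hp'1, _⟩, hN'n, hN'2n⟩, hs'N', hp'lo, hp'hi⟩ := hbL
  have hN'0 : 0 < N' := le_trans hn hN'n
  have h6p' : N' ≤ 6 * p' := by
    rw [div_le_iff₀ (by norm_num : (0:ℝ) < 6)] at hp'lo
    have : (N' : ℝ) ≤ ((6 * p' : ℕ) : ℝ) := by push_cast; linarith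
    exact_mod_cast this
  have h5p' : 5 * p' ≤ N' := by
    rw [le_div_iff₀ (by norm_num : (0:ℝ) < 5)] at hp'hi
    have : ((5 * p' : ℕ) : ℝ) ≤ (N' : ℝ) := by push_cast; linarith
    exact_mod_cast this
  set K := MN β (2 * n) with hK
  set M' := MN β N' with hM'
  have hM'18 : 18 ≤ M' := le_trans hM18 (MN_mono β hβ hn hN'n)
  have hM'K : M' ≤ K := MN_mono β hβ (le_trans hn hN'n) hN'2n
  have hMNK : MN β N ≤ K := MN_mono β hβ (le_trans hn hNn) hN2n
  set I := (Finset.Icc 1 M').filter (fun i => idx N' s' p' i ∈ Prog β s p N) with hI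
  -- |I| is large
  have hIcard : 2 * M' ≤ 5 * I.card := by
    have hsub : Prog β s p N ∩ Prog β s' p' N' ⊆ I.image (fun i => idx N' s' p' i) := by
      intro x hx
      rw [Finset.mem_inter] at hx
      obtain ⟨hxP, hxP'⟩ := hx
      rw [Prog, Finset.mem_image] at hxP'
      obtain ⟨i, hi, hix⟩ := hxP'
      exact Finset.mem_image.mpr ⟨i, Finset.mem_filter.mpr ⟨hi, by rwa [hix]⟩, hix⟩
    have h1 : (Prog β s p N ∩ Prog β s' p' N').card ≤ I.card :=
      le_trans (Finset.card_le_card hsub) Finset.card_image_le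
    have h2 : 2 * (M' : ℝ) ≤ 5 * I.card := by
      rw [div_le_iff₀ (by norm_num : (0:ℝ) < 5)] at hcard
      have : ((Prog β s p N ∩ Prog β s' p' N').card : ℝ) ≤ (I.card : ℝ) := by exact_mod_cast h1
      linarith
    exact_mod_cast h2
  have hIcard8 : 8 ≤ I.card := by omega
  -- members of I
  have hImem : ∀ i ∈ I, 1 ≤ i ∧ i ≤ M' ∧ idx N' s' p' i ∈ Prog β s p N := by
    intro i hi
    rw [hI, Finset.mem_filter, Finset.mem_Icc] at hi
    exact ⟨hi.1.1, hi.1.2, hi.2⟩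
  -- Δ bound: 5 * (Tf M' - Tf 1) ≤ M' + 3  (as ℤ facts for omega)
  have hp'1' : (1:ℤ) ≤ (p' : ℤ) := by exact_mod_cast hp'1
  have h5p'' : 5 * (p' : ℤ) ≤ (N' : ℤ) := by exact_mod_cast h5p'
  have h6p'' : (N' : ℤ) ≤ 6 * (p' : ℤ) := by exact_mod_cast h6p'
  have hN'0' : (0:ℤ) < (N' : ℤ) := by exact_mod_cast hN'0
  have hDelta : 5 * ((Tf N' s' p' M' : ℤ) - Tf N' s' p' 1) < (M' : ℤ) + 4 := by
    have h := (Tf_diff_lt N' s' p' (i := 1) (j := M') hN'0 hs'1).2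
    have hM'1 : (1:ℤ) ≤ (M' : ℤ) := by exact_mod_cast le_trans (by norm_num) hM'18
    set Δ : ℤ := (Tf N' s' p' M' : ℤ) - Tf N' s' p' 1 with hΔdef
    have hmul : ((M':ℤ) - 1) * (5 * p') ≤ ((M':ℤ) - 1) * N' :=
      mul_le_mul_of_nonneg_left h5p'' (by linarith)
    have hstep : (N':ℤ) * (5 * Δ) < (N':ℤ) * ((M':ℤ) + 4) := by
      have e1 : ((M':ℤ) - 1) * (5 * p') = 5 * ((M':ℤ) * p') - 5 * p' := by ring
      have e2 : ((M':ℤ) - 1) * (N':ℤ) = (M':ℤ) * N' - N' := by ring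
      have e3 : (N':ℤ) * (5 * Δ) = 5 * ((N':ℤ) * Δ) := by ring
      have e4 : (N':ℤ) * ((M':ℤ) + 4) = (M':ℤ) * N' + 4 * N' := by ring
      rw [e3, e4]
      rw [e1, e2] at hmul
      have h' : (N':ℤ) * Δ < (M':ℤ) * p' - 1 * p' + N' := h
      linarith [h', hmul]
    have := (mul_lt_mul_iff_right₀ hN'0').mp hstep
    linarith
  -- (1) zero-wrap pair
  have hpig1 : ∃ i1 ∈ I, ∃ j1 ∈ I, i1 < j1 ∧ Tf N' s' p' i1 = Tf N' s' p' j1 := by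
    have hmap : ∀ i ∈ I, Tf N' s' p' i ∈ Finset.Icc (Tf N' s' p' 1) (Tf N' s' p' M') := by
      intro i hi
      obtain ⟨h1, h2, _⟩ := hImem i hi
      exact Finset.mem_Icc.mpr ⟨Tf_mono N' s' p' h1, Tf_mono N' s' p' h2⟩
    have hcardlt : (Finset.Icc (Tf N' s' p' 1) (Tf N' s' p' M')).card < I.card := by
      rw [Nat.card_Icc]
      have hTT : Tf N' s' p' 1 ≤ Tf N' s' p' M' := Tf_mono N' s' p' (by omega)
      omega
    obtain ⟨x, hx, y, hy, hxy, hfxy⟩ :=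
      Finset.exists_ne_map_eq_of_card_lt_of_maps_to hcardlt hmap
    rcases lt_or_gt_of_ne hxy with h | h
    · exact ⟨x, hx, y, hy, h, hfxy⟩
    · exact ⟨y, hy, x, hx, h, hfxy.symm⟩
  -- (2) wrap pair
  have hpig2 : ∃ i2 ∈ I, ∃ j2 ∈ I, i2 < j2 ∧ Tf N' s' p' i2 < Tf N' s' p' j2 := by
    have hne : I.Nonempty := Finset.card_pos.mp (by omega)
    set i2 := I.min' hne
    set j2 := I.max' hne
    have hi2 : i2 ∈ I := I.min'_mem hne
    have hj2 : j2 ∈ I := I.max'_mem hne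
    have hle : i2 ≤ j2 := I.min'_le _ hj2
    have hspan : I.card ≤ j2 - i2 + 1 := by
      have : I ⊆ Finset.Icc i2 j2 := fun x hx =>
        Finset.mem_Icc.mpr ⟨I.min'_le x hx, I.le_max' x hx⟩
      calc I.card ≤ (Finset.Icc i2 j2).card := Finset.card_le_card this
        _ = j2 - i2 + 1 := by rw [Nat.card_Icc]; omega
    have hij : i2 < j2 := by omega
    refine ⟨i2, hi2, j2, hj2, hij, ?_⟩
    have h := (Tf_diff_lt N' s' p' (i := i2) (j := j2) hN'0 hs'1).1
    have hji : (7:ℤ) ≤ (j2:ℤ) - i2 := by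
      have : 7 ≤ j2 - i2 := by omega
      omega
    have h7 : 7 * (p':ℤ) ≤ ((j2:ℤ) - i2) * p' := mul_le_mul_of_nonneg_right hji (by linarith)
    have h7' : ((j2:ℤ) - i2) * p' = (j2:ℤ) * p' - (i2:ℤ) * p' := by ring
    have hx : (N':ℤ) * 0 < (N':ℤ) * ((Tf N' s' p' j2 : ℤ) - Tf N' s' p' i2) := by
      rw [mul_zero]
      linarith [h, h7, h7', h6p'', hp'1']
    have hx2 := (mul_lt_mul_iff_right₀ hN'0').mp hx
    have : (Tf N' s' p' i2 : ℤ) < (Tf N' s' p' j2 : ℤ) := by linarith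
    exact_mod_cast this
  -- (3) close pair
  have hpig3 : ∃ i3 ∈ I, ∃ j3 ∈ I, i3 < j3 ∧ j3 - i3 ≤ 2 := by
    have hmap : ∀ i ∈ I, (i - 1) / 3 ∈ Finset.Icc 0 ((M' - 1) / 3) := by
      intro i hi
      obtain ⟨h1, h2, _⟩ := hImem i hi
      rw [Finset.mem_Icc]
      exact ⟨Nat.zero_le _, by apply Nat.div_le_div_right; omega⟩
    have hcardlt : (Finset.Icc 0 ((M' - 1) / 3)).card < I.card := by
      rw [Nat.card_Icc]
      omega
    obtain ⟨x, hx, y, hy, hxy, hfxy⟩ :=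
      Finset.exists_ne_map_eq_of_card_lt_of_maps_to hcardlt hmap
    have hxI := (hImem x hx).1
    have hyI := (hImem y hy).1
    rcases lt_or_gt_of_ne hxy with h | h
    · exact ⟨x, hx, y, hy, h, by omega⟩
    · exact ⟨y, hy, x, hx, h, by omega⟩
  obtain ⟨i1, hi1, j1, hj1, hij1, hT1⟩ := hpig1
  obtain ⟨i2, hi2, j2, hj2, hij2, hT2⟩ := hpig2
  rw [Finset.mem_union]
  by_cases hA : ∃ i ∈ I, ∃ j ∈ I, i < j ∧ j - i ≤ 2 ∧ Tf N' s' p' i = Tf N' s' p' j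
  · -- scenario A : close zero-wrap pair + generic wrap pair
    left
    obtain ⟨i1', hi1', j1', hj1', hij1', hclose, hT1'⟩ := hA
    have hw2 : Tf N' s' p' j2 - Tf N' s' p' i2 ≤ K := by
      have hji : Tf N' s' p' i2 ≤ Tf N' s' p' j2 := le_of_lt hT2
      have hlo := Tf_mono N' s' p' (show 1 ≤ i2 from (hImem i2 hi2).1)
      have hhi := Tf_mono N' s' p' (show j2 ≤ M' from (hImem j2 hj2).2.1)
      omega
    exact build β K s p N s' p' N' M' 2 K K hs1 hN0 hs'1 hs'N' hMNK hM'K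
      i1' j1' i2 j2 (hImem i1' hi1').1 (hImem i1' hi1').2.1 hij1' hT1' (by omega)
      (hImem i1' hi1').2.2 (hImem j1' hj1').2.2 hij2 hT2
      (by have := (hImem j2 hj2).2.1; have := (hImem i2 hi2).1; omega) hw2
      (hImem i2 hi2).2.2 (hImem j2 hj2).2.2
  · -- scenario B : generic zero-wrap pair + close wrap pair (w = 1)
    right
    obtain ⟨i3, hi3, j3, hj3, hij3, hclose⟩ := hpig3
    have hTle : Tf N' s' p' i3 ≤ Tf N' s' p' j3 := Tf_mono N' s' p' (le_of_lt hij3)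
    have hTne : Tf N' s' p' i3 ≠ Tf N' s' p' j3 := by
      intro hcon
      exact hA ⟨i3, hi3, j3, hj3, hij3, hclose, hcon⟩
    have hT3 : Tf N' s' p' i3 < Tf N' s' p' j3 := lt_of_le_of_ne hTle hTne
    -- w ≤ 1 : since j3 - i3 ≤ 2 and 5 p' ≤ N'
    have hw1 : Tf N' s' p' j3 - Tf N' s' p' i3 ≤ 1 := by
      have h := (Tf_diff_lt N' s' p' (i := i3) (j := j3) hN'0 hs'1).2
      have hji : (j3:ℤ) - i3 ≤ 2 := by
        have : j3 - i3 ≤ 2 := hclose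
        omega
      have h2p : ((j3:ℤ) - i3) * p' ≤ 2 * p' := mul_le_mul_of_nonneg_right hji (by linarith)
      have h2p' : ((j3:ℤ) - i3) * p' = (j3:ℤ) * p' - (i3:ℤ) * p' := by ring
      have hx : (N':ℤ) * ((Tf N' s' p' j3 : ℤ) - Tf N' s' p' i3) < (N':ℤ) * 2 := by
        have : 5 * (2 * (p':ℤ)) ≤ 2 * N' := by linarith
        linarith [h, h2p, h2p']
      have : (Tf N' s' p' j3 : ℤ) - Tf N' s' p' i3 < 2 := (mul_lt_mul_iff_right₀ hN'0').mp hx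
      have h2 : (Tf N' s' p' j3 : ℤ) ≤ (Tf N' s' p' i3 : ℤ) + 1 := by linarith
      have h3 : Tf N' s' p' j3 ≤ Tf N' s' p' i3 + 1 := by exact_mod_cast h2
      omega
    exact build β K s p N s' p' N' M' K 2 1 hs1 hN0 hs'1 hs'N' hMNK hM'K
      i1 j1 i3 j3 (hImem i1 hi1).1 (hImem i1 hi1).2.1 hij1 hT1
      (by have := (hImem j1 hj1).2.1; omega)
      (hImem i1 hi1).2.2 (hImem j1 hj1).2.2 hij3 hT3 hclose hw1
      (hImem i3 hi3).2.2 (hImem j3 hj3).2.2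


end UCB

theorem U_card_bound (β : ℝ) (hβ : 0 < β) (hβ1 : β < 1) :
    ∀ᶠ n : ℕ in atTop, ∀ a ∈ L n,
      ((UU β n a.1 a.2.1 a.2.2).card : ℝ) ≤ (Real.log n) ^ 7 := by
  have hev1 : ∀ᶠ n : ℕ in atTop, (512:ℕ) ≤ n := eventually_ge_atTop _
  have hev2 : ∀ᶠ n : ℕ in atTop, (400000:ℝ) ≤ Real.log n :=
    (Real.tendsto_log_atTop.comp tendsto_natCast_atTop_atTop).eventually_ge_atTop _
  filter_upwards [hev1, hev2] with n hn512 hlogn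
  rintro ⟨s, p, N⟩ ha
  have hn1 : 1 ≤ n := by omega
  -- 18 ≤ MN β n
  have hM18 : 18 ≤ MN β n := by
    have h29 : Real.logb 2 512 = 9 := by
      rw [show (512:ℝ) = 2 ^ (9:ℕ) by norm_num, Real.logb_pow,
        Real.logb_self_eq_one (by norm_num : (1:ℝ) < 2)]
      norm_num
    have hmono : Real.logb 2 512 ≤ Real.logb 2 n := by
      apply Real.logb_le_logb_of_le (by norm_num : (1:ℝ) < 2) (by norm_num)
      exact_mod_cast hn512
    have h9 : (9:ℝ) ≤ Real.logb 2 n := by rw [h29] at hmono; exact hmono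
    have h18 : (18:ℝ) ≤ (2 + β) * Real.logb 2 n := by nlinarith
    have : (17:ℕ) < MN β n := Nat.lt_ceil.mpr (by push_cast; linarith)
    omega
  set K := MN β (2 * n) with hK
  have hK1 : 1 ≤ K := by
    have : MN β n ≤ K := by
      apply Nat.ceil_le_ceil
      apply mul_le_mul_of_nonneg_left _ (by linarith)
      apply Real.logb_le_logb_of_le (by norm_num : (1:ℝ) < 2)
      · exact_mod_cast hn1
      · exact_mod_cast (by omega : n ≤ 2 * n)
    omega
  -- cardinality chain
  have hsub := UCB.UU_subset β hβ n s p N hn1 hM18 ha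
  have hcard1 : (UU β n s p N).card ≤ 24 * K ^ 6 := by
    have h1 := Finset.card_le_card hsub
    have h2 := Finset.card_union_le
      ((UCB.box K 2 K K).image (UCB.recover K s p N))
      ((UCB.box K K 2 1).image (UCB.recover K s p N))
    have h3 := Finset.card_image_le (s := UCB.box K 2 K K) (f := UCB.recover K s p N)
    have h4 := Finset.card_image_le (s := UCB.box K K 2 1) (f := UCB.recover K s p N)
    rw [UCB.box_card] at h3
    rw [UCB.box_card] at h4
    have h5 : (UU β n s p N).card ≤
        K * (K * (K * (2 * ((2 * K + 1) * (2 * (K * K)))))) +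
        K * (K * (K * (K * ((2 * K + 1) * (2 * (2 * 1)))))) := by
      calc (UU β n s p N).card ≤ _ := h1
        _ ≤ _ := h2
        _ ≤ _ := Nat.add_le_add h3 h4
    have h6 : K * (K * (K * (2 * ((2 * K + 1) * (2 * (K * K)))))) +
        K * (K * (K * (K * ((2 * K + 1) * (2 * (2 * 1)))))) =
        8 * K ^ 6 + 12 * K ^ 5 + 4 * K ^ 4 := by ring
    have h7 : K ^ 5 ≤ K ^ 6 := Nat.pow_le_pow_right hK1 (by norm_num)
    have h8 : K ^ 4 ≤ K ^ 6 := Nat.pow_le_pow_right hK1 (by norm_num)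
    omega
  -- K ≤ 4.5 log n
  have hlog2 : (0.6931471803 : ℝ) < Real.log 2 := Real.log_two_gt_d9
  have hx0 : (0:ℝ) < Real.log n := by linarith
  have hKx : (K : ℝ) ≤ 4.5 * Real.log n := by
    have harg : (0:ℝ) ≤ (2 + β) * Real.logb 2 ((2 * n : ℕ)) := by
      apply mul_nonneg (by linarith)
      apply Real.logb_nonneg (by norm_num)
      exact_mod_cast (by omega : 1 ≤ 2 * n)
    have hceil : (K : ℝ) < (2 + β) * Real.logb 2 ((2 * n : ℕ)) + 1 := by
      rw [hK, MN]
      exact Nat.ceil_lt_add_one (by exact_mod_cast harg)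
    have hlogb : Real.logb 2 ((2 * n : ℕ)) = (Real.log 2 + Real.log n) / Real.log 2 := by
      rw [Real.logb, show ((2 * n : ℕ) : ℝ) = 2 * (n : ℝ) by push_cast; ring,
        Real.log_mul (by norm_num) (by positivity)]
    have hβ3 : (2 + β) ≤ 3 := by linarith
    have hb : Real.logb 2 ((2 * n : ℕ)) ≤ 1 + Real.log n / Real.log 2 := by
      rw [hlogb]
      rw [add_div]
      rw [div_self (by linarith : Real.log 2 ≠ 0)]
    have hlogbn : (0:ℝ) ≤ 1 + Real.log n / Real.log 2 := by positivity
    have : (K:ℝ) < 3 * (1 + Real.log n / Real.log 2) + 1 := by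
      calc (K:ℝ) < (2 + β) * Real.logb 2 ((2 * n : ℕ)) + 1 := hceil
        _ ≤ 3 * (1 + Real.log n / Real.log 2) + 1 := by
            have h0b : 0 ≤ Real.logb 2 ((2 * n : ℕ)) := by
              apply Real.logb_nonneg (by norm_num)
              exact_mod_cast (by omega : 1 ≤ 2 * n)
            nlinarith
    have hdiv : Real.log n / Real.log 2 ≤ Real.log n / 0.6931471803 := by
      apply div_le_div_of_nonneg_left (le_of_lt hx0) (by norm_num) (le_of_lt hlog2)
    have : (K:ℝ) < 4 + 3 * (Real.log n / 0.6931471803) := by linarith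
    have h433 : 3 * (Real.log n / 0.6931471803) ≤ 4.33 * Real.log n := by
      rw [div_eq_mul_inv]
      nlinarith [hx0]
    linarith
  -- finish
  have hfin : (24 * K ^ 6 : ℝ) ≤ (Real.log n) ^ 7 := by
    have hK0 : (0:ℝ) ≤ K := Nat.cast_nonneg _
    have h1 : (K:ℝ) ^ 6 ≤ (4.5 * Real.log n) ^ 6 := by
      apply pow_le_pow_left₀ hK0 hKx
    have h2 : (4.5 * Real.log n) ^ 6 = 4.5 ^ 6 * (Real.log n) ^ 6 := by ring
    have h3 : (24 : ℝ) * (4.5 ^ 6 * (Real.log n) ^ 6) ≤ Real.log n * (Real.log n) ^ 6 := by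
      have : (24 * 4.5 ^ 6 : ℝ) ≤ 400000 := by norm_num
      have h6 : (0:ℝ) ≤ (Real.log n) ^ 6 := by positivity
      nlinarith [hlogn, h6]
    calc (24 * K ^ 6 : ℝ) ≤ 24 * (4.5 ^ 6 * (Real.log n) ^ 6) := by nlinarith [h1, h2]
      _ ≤ Real.log n * (Real.log n) ^ 6 := h3
      _ = (Real.log n) ^ 7 := by ring
  calc ((UU β n s p N).card : ℝ) ≤ (24 * K ^ 6 : ℕ) := by exact_mod_cast hcard1
    _ = (24 * (K:ℝ) ^ 6) := by push_cast; ring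
    _ ≤ (Real.log n) ^ 7 := hfin
end
end

section
/- There exist a constant c > 0 and an integer n_0 such that for all n ≥ n_0, E[Λ(n)] ≥ c · n^{1−β}. -/
open MeasureTheory ProbabilityTheory Filter

noncomputable section

/-- The event `{ξ_s = 0 and ξ_{s+ip (mod N)} = 1 for all 1 ≤ i ≤ M_N}`,
whose indicator is `I(s,p,N)`. -/
def Ev {Ω : Type*} (ξ : ℕ → Ω → Bool) (β : ℝ) (s p N : ℕ) : Set Ω :=
  {ω | ξ s ω = false ∧ ∀ i, 1 ≤ i → i ≤ MN β N → ξ (idx N s p i) ω = true}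

/-!
If `p` is a step none of whose first `M_N` multiples is divisible by `N`, then the positions
`s + ip (mod N)`, `1 ≤ i ≤ M_N`, all differ from `s`, so by independence
`P(I(s,p,N) = 1) ≥ 2^{-(M_N+1)} ≥ 1 / (4 N^{2+β})`. A step `p ≤ N` with `N ∣ ip` equals
`kN/i` with `k ≤ i ≤ M_N`, so only `O(log² N)` of the `≈ N/30` steps in `[N/6, N/5]` are bad.
Summing over the `n` starts `s ≤ n`, the `n + 1` moduli `N` and the `≥ n/60` good steps gives
`E[Λ(n)] ≳ n³ · n^{-(2+β)} = n^{1-β}`.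
-/

open Finset

theorem idx_ne_self {N s p i : ℕ} (hs : 1 ≤ s) (hsN : s ≤ N) (h : ¬ N ∣ i * p) :
    idx N s p i ≠ s := by
  intro he
  have hmod : (s - 1 + i * p) % N = (s - 1 + 0) % N := by
    unfold idx at he
    rw [show s + i * p - 1 = s - 1 + i * p by omega] at he
    rw [add_zero, Nat.mod_eq_of_lt (by omega : s - 1 < N)]
    omega
  exact h (Nat.modEq_zero_iff_dvd.1 (Nat.ModEq.add_left_cancel' (s - 1) hmod))

theorem measure_forall_eq_of_iIndepFun {Ω ι : Type*} [MeasurableSpace Ω] {μ : Measure Ω}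
    {ξ : ι → Ω → Bool} (hindep : iIndepFun ξ μ)
    (hone : ∀ i, μ {ω | ξ i ω = true} = 1/2) (hzero : ∀ i, μ {ω | ξ i ω = false} = 1/2)
    (T : Finset ι) (b : ι → Bool) :
    μ {ω | ∀ j ∈ T, ξ j ω = b j} = (1/2) ^ #T := by
  have hset : {ω | ∀ j ∈ T, ξ j ω = b j} = ⋂ j ∈ T, ξ j ⁻¹' {b j} := by ext; simp
  rw [hset, hindep.meas_biInter fun j _ => ⟨{b j}, trivial, rfl⟩, ← prod_const]
  refine prod_congr rfl fun j _ => ?_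
  cases b j
  · exact hzero j
  · exact hone j

theorem toReal_measure_Ev_ge {Ω : Type*} [MeasurableSpace Ω] {μ : Measure Ω}
    [IsProbabilityMeasure μ]
    {ξ : ℕ → Ω → Bool} (hindep : iIndepFun ξ μ)
    (hone : ∀ i, μ {ω | ξ i ω = true} = 1/2) (hzero : ∀ i, μ {ω | ξ i ω = false} = 1/2)
    (β : ℝ) {s p N : ℕ} (hs : 1 ≤ s) (hsN : s ≤ N)
    (hp : ¬ ∃ i ∈ Icc 1 (MN β N), N ∣ i * p) :
    (1/2 : ℝ) ^ (MN β N + 1) ≤ (μ (Ev ξ β s p N)).toReal := by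
  set T := insert s ((Icc 1 (MN β N)).image (idx N s p))
  have hT : #T ≤ MN β N + 1 :=
    (card_insert_le _ _).trans (by simpa using card_image_le (s := Icc 1 (MN β N)))
  have hsub : {ω | ∀ j ∈ T, ξ j ω = decide (j ≠ s)} ⊆ Ev ξ β s p N := by
    intro ω hω
    refine ⟨by simpa using hω s (mem_insert_self _ _), fun i hi1 hiM => ?_⟩
    have hne := idx_ne_self hs hsN fun hdvd => hp ⟨i, mem_Icc.2 ⟨hi1, hiM⟩, hdvd⟩
    simpa [hne] using hω _ (mem_insert_of_mem (mem_image_of_mem _ (mem_Icc.2 ⟨hi1, hiM⟩)))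
  calc (1/2 : ℝ) ^ (MN β N + 1) ≤ (1/2 : ℝ) ^ #T :=
        pow_le_pow_of_le_one (by norm_num) (by norm_num) hT
    _ = (μ {ω | ∀ j ∈ T, ξ j ω = decide (j ≠ s)}).toReal := by
      rw [measure_forall_eq_of_iIndepFun hindep hone hzero]; simp
    _ ≤ (μ (Ev ξ β s p N)).toReal := ENNReal.toReal_mono (measure_ne_top _ _) (measure_mono hsub)

theorem MN_mono {β : ℝ} (hβ : 0 ≤ 2 + β) {N K : ℕ} (hN : 1 ≤ N) (hNK : N ≤ K) :
    MN β N ≤ MN β K :=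
  Nat.ceil_le_ceil <| mul_le_mul_of_nonneg_left
    (Real.logb_le_logb_of_le one_lt_two (by exact_mod_cast hN) (by exact_mod_cast hNK)) hβ

theorem MN_lt {β : ℝ} (hβ : 0 ≤ 2 + β) {N : ℕ} (hN : 1 ≤ N) :
    (MN β N : ℝ) < (2 + β) * Real.logb 2 N + 1 :=
  Nat.ceil_lt_add_one <| mul_nonneg hβ <| Real.logb_nonneg one_lt_two (by exact_mod_cast hN)

theorem two_pow_MN_succ_le {β : ℝ} (hβ : 0 ≤ 2 + β) {N : ℕ} (hN : 1 ≤ N) :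
    (2 : ℝ) ^ (MN β N + 1) ≤ 4 * (N : ℝ) ^ (2 + β) := by
  have hN0 : (0 : ℝ) < N := by exact_mod_cast hN
  calc (2 : ℝ) ^ (MN β N + 1) = (2 : ℝ) ^ ((MN β N : ℝ) + 1) := by norm_cast
    _ ≤ (2 : ℝ) ^ ((2 + β) * Real.logb 2 N + 2) :=
      Real.rpow_le_rpow_of_exponent_le one_le_two (by linarith [MN_lt hβ hN])
    _ = 4 * (N : ℝ) ^ (2 + β) := by
      rw [Real.rpow_add two_pos, mul_comm (2 + β), Real.rpow_mul zero_le_two,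
        Real.rpow_logb two_pos one_lt_two.ne' hN0]
      norm_num [mul_comm]

theorem eventually_MN_succ_sq_le {β : ℝ} (hβ : 0 ≤ 2 + β) {c : ℝ} (hc : 0 < c) :
    ∀ᶠ N : ℕ in atTop, ((MN β N : ℝ) + 1) ^ 2 + 1 ≤ c * N := by
  set a := (2 + β) / Real.log 2
  have hlo : (fun x : ℝ => ((2 + β) * Real.logb 2 x + 2) ^ 2 + 1) =o[atTop] id := by
    have h2 := (Real.isLittleO_pow_log_id_atTop (n := 2)).const_mul_left (a ^ 2)
    have h1 := Real.isLittleO_log_id_atTop.const_mul_left (4 * a)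
    refine ((h2.add h1).add (Asymptotics.isLittleO_const_id_atTop (5 : ℝ))).congr_left
      fun x => ?_
    simp only [a, Real.logb]
    ring
  filter_upwards [(hlo.comp_tendsto tendsto_natCast_atTop_atTop).bound hc,
    eventually_ge_atTop 1] with N hN hN1
  have hN0 : (0 : ℝ) ≤ N := N.cast_nonneg
  rw [Function.comp_apply, Function.comp_apply, id, Real.norm_of_nonneg (by positivity),
    Real.norm_of_nonneg hN0] at hN
  have hMN : (MN β N : ℝ) + 1 ≤ (2 + β) * Real.logb 2 N + 2 := by linarith [MN_lt hβ hN1]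
  linarith [pow_le_pow_left₀ (by positivity) hMN 2]

theorem card_Icc_ceil_floor_ge {a b : ℝ} (ha : 0 ≤ a) : b - a - 1 ≤ #(Icc ⌈a⌉₊ ⌊b⌋₊) := by
  rw [Nat.card_Icc]
  have hsub : ((⌊b⌋₊ + 1 : ℕ) : ℝ) - ⌈a⌉₊ ≤ ((⌊b⌋₊ + 1 - ⌈a⌉₊ : ℕ) : ℝ) := by
    rw [sub_le_iff_le_add]; exact_mod_cast le_tsub_add
  push_cast at hsub
  linarith [Nat.lt_floor_add_one b, Nat.ceil_lt_add_one ha]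

def stepWindow (N : ℕ) : Finset ℕ :=
  (Icc 1 N).filter fun p : ℕ => (N : ℝ) / 6 ≤ p ∧ (p : ℝ) ≤ N / 5

theorem card_stepWindow_ge (N : ℕ) : (N : ℝ) / 30 - 1 ≤ #(stepWindow N) := by
  rcases N.eq_zero_or_pos with rfl | hN
  · norm_num
    exact le_trans (by norm_num) (Nat.cast_nonneg _)
  have hsub : Icc ⌈(N : ℝ) / 6⌉₊ ⌊(N : ℝ) / 5⌋₊ ⊆ stepWindow N := by
    intro p hp
    have hN' : (0 : ℝ) < N := by exact_mod_cast hN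
    obtain ⟨hp6, hp5⟩ := mem_Icc.1 hp
    have hp6' : (N : ℝ) / 6 ≤ p := Nat.ceil_le.1 hp6
    have hp5' : (p : ℝ) ≤ N / 5 := Nat.le_floor_iff (by positivity) |>.1 hp5
    refine mem_filter.2 ⟨mem_Icc.2 ⟨?_, ?_⟩, hp6', hp5'⟩
    · exact_mod_cast (show (0 : ℝ) < p by linarith)
    · exact_mod_cast (show (p : ℝ) ≤ N by linarith)
  calc (N : ℝ) / 30 - 1 = (N : ℝ) / 5 - (N : ℝ) / 6 - 1 := by ring
    _ ≤ #(Icc ⌈(N : ℝ) / 6⌉₊ ⌊(N : ℝ) / 5⌋₊) := card_Icc_ceil_floor_ge (by positivity)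
    _ ≤ #(stepWindow N) := by exact_mod_cast card_le_card hsub

theorem card_filter_exists_dvd_mul_le (N M : ℕ) (A : Finset ℕ) (hA : ∀ p ∈ A, p ≤ N) :
    #(A.filter fun p => ∃ i ∈ Icc 1 M, N ∣ i * p) ≤ M * (M + 1) := by
  have hsub : A.filter (fun p => ∃ i ∈ Icc 1 M, N ∣ i * p) ⊆
      (Icc 1 M ×ˢ range (M + 1)).image fun ik => N * ik.2 / ik.1 := by
    intro p hp
    obtain ⟨hpA, i, hi, hdvd⟩ := mem_filter.1 hp
    obtain ⟨hi1, hiM⟩ := mem_Icc.1 hi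
    have hk : i * p / N ≤ i :=
      Nat.div_le_of_le_mul (by simpa [mul_comm] using Nat.mul_le_mul_left i (hA p hpA))
    refine mem_image.2 ⟨(i, i * p / N), mem_product.2 ⟨hi, mem_range.2 (by omega)⟩, ?_⟩
    simp [Nat.mul_div_cancel' hdvd, Nat.mul_div_cancel_left p hi1]
  calc _ ≤ #(Icc 1 M ×ˢ range (M + 1)) := (card_le_card hsub).trans card_image_le
    _ = M * (M + 1) := by simp

def goodSteps (β : ℝ) (N : ℕ) : Finset ℕ :=
  (stepWindow N).filter fun p => ¬ ∃ i ∈ Icc 1 (MN β N), N ∣ i * p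

theorem card_goodSteps_ge (β : ℝ) (N : ℕ) :
    (N : ℝ) / 30 - 1 - MN β N * (MN β N + 1) ≤ #(goodSteps β N) := by
  set bad := (stepWindow N).filter fun p => ∃ i ∈ Icc 1 (MN β N), N ∣ i * p
  have hsplit : (#(stepWindow N) : ℝ) = #bad + #(goodSteps β N) := by
    exact_mod_cast (card_filter_add_card_filter_not _).symm
  have hbad : (#bad : ℝ) ≤ MN β N * (MN β N + 1) := by
    exact_mod_cast card_filter_exists_dvd_mul_le N _ _ fun p hp =>
      (mem_Icc.1 (mem_filter.1 hp).1).2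
  linarith [card_stepWindow_ge N]

theorem sum_goodSteps_le_sum_L (β : ℝ) (n : ℕ) (f : ℕ × ℕ × ℕ → ℝ) (hf : ∀ a, 0 ≤ f a) :
    ∑ s ∈ Icc 1 n, ∑ N ∈ Icc n (2 * n), ∑ p ∈ goodSteps β N, f (s, p, N) ≤
      ∑ a ∈ L n, f a := by
  set T := (Icc 1 (2 * n) ×ˢ Icc n (2 * n)).filter fun pN => pN.1 ∈ goodSteps β pN.2
  have hgood : ∀ {p N}, p ∈ goodSteps β N →
      p ∈ Icc 1 N ∧ (N : ℝ) / 6 ≤ p ∧ (p : ℝ) ≤ N / 5 := fun hp =>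
    mem_filter.1 (mem_filter.1 hp).1
  have hT : ∀ pN : ℕ × ℕ, pN ∈ T ↔ pN.2 ∈ Icc n (2 * n) ∧ pN.1 ∈ goodSteps β pN.2 := by
    refine fun pN => ⟨fun h => ⟨(mem_product.1 (mem_filter.1 h).1).2, (mem_filter.1 h).2⟩,
      fun ⟨hN, hp⟩ => mem_filter.2 ⟨mem_product.2 ⟨?_, hN⟩, hp⟩⟩
    have := mem_Icc.1 (hgood hp).1
    have := mem_Icc.1 hN
    exact mem_Icc.2 (by omega)
  calc _ = ∑ a ∈ Icc 1 n ×ˢ T, f a := by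
        rw [sum_product]
        exact sum_congr rfl fun s _ =>
          (sum_finset_product_right _ _ _ hT (f := fun pN => f (s, pN))).symm
    _ ≤ ∑ a ∈ L n, f a := by
      refine sum_le_sum_of_subset_of_nonneg (fun ⟨s, p, N⟩ ha => ?_) fun a _ _ => hf a
      obtain ⟨hs, hpN⟩ := mem_product.1 ha
      obtain ⟨hN, hp⟩ : N ∈ Icc n (2 * n) ∧ p ∈ goodSteps β N := (hT _).1 hpN
      obtain ⟨hpN', hp6, hp5⟩ := hgood hp
      have := mem_Icc.1 hs
      have := mem_Icc.1 hN
      have := mem_Icc.1 hpN'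
      simp only [L, mem_filter, mem_product, mem_Icc]
      exact ⟨⟨by omega, by omega, by omega⟩, by omega, hp6, hp5⟩

theorem card_goodSteps_ge_of_MN_small {β : ℝ} (hβ : 0 ≤ 2 + β) {n N : ℕ}
    (hsmall : ((MN β (2 * n) : ℝ) + 1) ^ 2 + 1 ≤ n / 60) (hN : N ∈ Icc n (2 * n)) :
    (n : ℝ) / 60 ≤ #(goodSteps β N) := by
  obtain ⟨hnN, hN2n⟩ := mem_Icc.1 hN
  have hM : (MN β N : ℝ) ≤ MN β (2 * n) := by
    rcases n.eq_zero_or_pos with rfl | hn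
    · simp_all
    exact_mod_cast MN_mono hβ (by omega) hN2n
  have hnN' : (n : ℝ) ≤ N := by exact_mod_cast hnN
  nlinarith [card_goodSteps_ge β N, (MN β N).cast_nonneg (α := ℝ)]

theorem mul_le_sum_goodSteps {β : ℝ} (hβ : 0 ≤ 2 + β) {n : ℕ}
    (hsmall : ((MN β (2 * n) : ℝ) + 1) ^ 2 + 1 ≤ n / 60) {q : ℝ} (hq : 0 ≤ q)
    (f : ℕ → ℕ → ℕ → ℝ)
    (hf : ∀ s ∈ Icc 1 n, ∀ N ∈ Icc n (2 * n), ∀ p ∈ goodSteps β N, q ≤ f s p N) :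
    n * ((n + 1) * (n / 60 * q)) ≤
      ∑ s ∈ Icc 1 n, ∑ N ∈ Icc n (2 * n), ∑ p ∈ goodSteps β N, f s p N := by
  calc _ = ∑ s ∈ Icc 1 n, ∑ N ∈ Icc n (2 * n), n / 60 * q := by
        simp only [sum_const, Nat.card_Icc, nsmul_eq_mul]
        push_cast [show 2 * n + 1 - n = n + 1 by omega]
        ring
    _ ≤ _ := by
        gcongr with s hs N hN
        calc _ ≤ #(goodSteps β N) * q :=
              mul_le_mul_of_nonneg_right (card_goodSteps_ge_of_MN_small hβ hsmall hN) hq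
          _ ≤ _ := by simpa using card_nsmul_le_sum _ _ _ (hf s hs N hN)

theorem rpow_one_sub_le_of_two_pow_le {β : ℝ} {n M : ℕ} (hn : 1 ≤ n)
    (hM : (2 : ℝ) ^ (M + 1) ≤ 4 * ((2 * n : ℕ) : ℝ) ^ (2 + β)) :
    1 / (240 * 2 ^ (2 + β)) * (n : ℝ) ^ (1 - β) ≤ n * ((n + 1) * (n / 60 * (1 / 2) ^ (M + 1))) := by
  have hn0 : (0 : ℝ) < n := by exact_mod_cast hn
  have hq : (4 * 2 ^ (2 + β) * (n : ℝ) ^ (2 + β))⁻¹ ≤ (1 / 2) ^ (M + 1) := by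
    rw [one_div, inv_pow]
    refine inv_anti₀ (by positivity) (hM.trans_eq ?_)
    push_cast
    rw [Real.mul_rpow zero_le_two hn0.le, mul_assoc]
  have hsplit : (n : ℝ) ^ (1 - β) = n ^ (3 : ℝ) / n ^ (2 + β) := by
    rw [← Real.rpow_sub hn0]; ring_nf
  calc 1 / (240 * 2 ^ (2 + β)) * (n : ℝ) ^ (1 - β)
      = n * (n * (n / 60 * (4 * 2 ^ (2 + β) * (n : ℝ) ^ (2 + β))⁻¹)) := by
        have : (0 : ℝ) < (n : ℝ) ^ (2 + β) := by positivity
        rw [hsplit, show (3 : ℝ) = (3 : ℕ) by norm_num, Real.rpow_natCast]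
        field_simp
        ring
    _ ≤ n * ((n + 1) * (n / 60 * (1 / 2) ^ (M + 1))) := by gcongr; linarith

theorem expectation_Lambda_lower_bound_general
    {Ω : Type*} [MeasurableSpace Ω] (μ : Measure Ω) [IsProbabilityMeasure μ]
    (ξ : ℕ → Ω → Bool)
    (hindep : iIndepFun ξ μ)
    (hone : ∀ i, μ {ω | ξ i ω = true} = 1/2)
    (hzero : ∀ i, μ {ω | ξ i ω = false} = 1/2)
    (β : ℝ) (hβ : 0 < β) :
    ∃ c : ℝ, 0 < c ∧ ∃ n₀ : ℕ, ∀ n : ℕ, n₀ ≤ n →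
      c * (n : ℝ) ^ ((1 : ℝ) - β) ≤
        ∑ a ∈ L n, (μ (Ev ξ β a.1 a.2.1 a.2.2)).toReal := by
  have hβ2 : 0 ≤ 2 + β := by linarith
  obtain ⟨N₀, hN₀⟩ := eventually_atTop.1 (eventually_MN_succ_sq_le hβ2 (c := 1 / 120) (by norm_num))
  refine ⟨1 / (240 * 2 ^ (2 + β)), by positivity, N₀ + 1, fun n hn => ?_⟩
  set M := MN β (2 * n)
  have hsmall : ((M : ℝ) + 1) ^ 2 + 1 ≤ n / 60 := by
    have := hN₀ (2 * n) (by omega); push_cast at this; linarith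
  have hterm : ∀ s ∈ Icc 1 n, ∀ N ∈ Icc n (2 * n), ∀ p ∈ goodSteps β N,
      (1 / 2 : ℝ) ^ (M + 1) ≤ (μ (Ev ξ β s p N)).toReal := by
    intro s hs N hN p hp
    obtain ⟨hs1, hsn⟩ := mem_Icc.1 hs
    obtain ⟨hnN, hN2n⟩ := mem_Icc.1 hN
    have hMN := MN_mono hβ2 (by omega) hN2n
    exact (pow_le_pow_of_le_one (by norm_num) (by norm_num) (by omega)).trans
      (toReal_measure_Ev_ge hindep hone hzero β hs1 (by omega) (mem_filter.1 hp).2)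
  calc _ ≤ n * ((n + 1) * (n / 60 * (1 / 2 : ℝ) ^ (M + 1))) :=
        rpow_one_sub_le_of_two_pow_le (by omega) (two_pow_MN_succ_le hβ2 (by omega))
    _ ≤ ∑ s ∈ Icc 1 n, ∑ N ∈ Icc n (2 * n), ∑ p ∈ goodSteps β N, (μ (Ev ξ β s p N)).toReal :=
        mul_le_sum_goodSteps hβ2 hsmall (by positivity) _ hterm
    _ ≤ _ := sum_goodSteps_le_sum_L β n (fun a => (μ (Ev ξ β a.1 a.2.1 a.2.2)).toReal)
        fun _ => ENNReal.toReal_nonneg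

theorem expectation_Lambda_lower_bound
    {Ω : Type*} [MeasurableSpace Ω] (μ : Measure Ω) [IsProbabilityMeasure μ]
    (ξ : ℕ → Ω → Bool) (hmeas : ∀ i, Measurable (ξ i))
    (hindep : iIndepFun ξ μ)
    (hone : ∀ i, μ {ω | ξ i ω = true} = 1/2)
    (hzero : ∀ i, μ {ω | ξ i ω = false} = 1/2)
    (β : ℝ) (hβ : 0 < β) (hβ1 : β < 1) :
    ∃ c : ℝ, 0 < c ∧ ∃ n₀ : ℕ, ∀ n : ℕ, n₀ ≤ n →
      c * (n : ℝ) ^ ((1 : ℝ) - β) ≤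
        ∑ a ∈ L n, (μ (Ev ξ β a.1 a.2.1 a.2.2)).toReal :=
  expectation_Lambda_lower_bound_general μ ξ hindep hone hzero β hβ
end
end
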